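/- arXiv:1601.04098 — 2 statements merged into one kernel-verified Lean document; each statement's English description precedes it below -/
import Mathlib

section
/- Soundness of the Transitivity axiom: if B ⊆ A* and C ⊆ B*, then C ⊆ A*. -/
open Classical Finset

/-- Peer pressure of set `A` on agent `b`: `‖A‖_b = Σ_{a∈A} w(a,b)`. -/
noncomputable def pressure {𝒜 : Type*} [Fintype 𝒜] (w : 𝒜 → 𝒜 → ℝ)
    (A : Finset 𝒜) (b : 𝒜) : ℝ :=
  ∑ a ∈ A, w a b

/-- Diffusion iterates: `A^0 = A`, `A^{k+1} = A^k ∪ {x : ‖A^k‖_x ≥ θ(x)}`. -/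
noncomputable def iterAdopt {𝒜 : Type*} [Fintype 𝒜] (w : 𝒜 → 𝒜 → ℝ) (θ : 𝒜 → ℝ)
    (A : Finset 𝒜) : ℕ → Finset 𝒜
  | 0 => A
  | k + 1 => iterAdopt w θ A k ∪
      Finset.univ.filter (fun x => θ x ≤ pressure w (iterAdopt w θ A k) x)

/-- Star closure: `A* = ⋃_{k≥0} A^k`. -/
noncomputable def starAdopt {𝒜 : Type*} [Fintype 𝒜] (w : 𝒜 → 𝒜 → ℝ) (θ : 𝒜 → ℝ)
    (A : Finset 𝒜) : Finset 𝒜 :=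
  Finset.univ.filter (fun x => ∃ k : ℕ, x ∈ iterAdopt w θ A k)


/-! The diffusion iterates are monotone both in the seed set (weights are nonnegative) and in
time, and `A*` is reached after finitely many steps `N` since `𝒜` is finite. Restarting the
diffusion from `A^N` therefore only replays it from step `N` on, so `(A^N)* ⊆ A*`, and
`C ⊆ B* ⊆ (A^N)* ⊆ A*`. -/

section

variable {𝒜 : Type*} [Fintype 𝒜] (w : 𝒜 → 𝒜 → ℝ) (θ : 𝒜 → ℝ)

lemma mem_starAdopt {A : Finset 𝒜} {x : 𝒜} :
    x ∈ starAdopt w θ A ↔ ∃ k, x ∈ iterAdopt w θ A k := by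
  simp [starAdopt]

lemma iterAdopt_subset_starAdopt (A : Finset 𝒜) (k : ℕ) :
    iterAdopt w θ A k ⊆ starAdopt w θ A :=
  fun _ hx => (mem_starAdopt w θ).2 ⟨k, hx⟩

lemma iterAdopt_monotone (A : Finset 𝒜) : Monotone (iterAdopt w θ A) :=
  monotone_nat_of_le_succ fun _ => subset_union_left

lemma iterAdopt_mono_left (hw : ∀ a b, 0 ≤ w a b) {A B : Finset 𝒜} (h : A ⊆ B) (k : ℕ) :
    iterAdopt w θ A k ⊆ iterAdopt w θ B k := by
  induction k with
  | zero => exact h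
  | succ k ih =>
    refine union_subset_union ih (monotone_filter_right _ fun x _ hx => hx.trans ?_)
    exact sum_le_sum_of_subset_of_nonneg ih fun a _ _ => hw a x

lemma starAdopt_mono (hw : ∀ a b, 0 ≤ w a b) {A B : Finset 𝒜} (h : A ⊆ B) :
    starAdopt w θ A ⊆ starAdopt w θ B := by
  intro x hx
  obtain ⟨k, hk⟩ := (mem_starAdopt w θ).1 hx
  exact iterAdopt_subset_starAdopt w θ B k (iterAdopt_mono_left w θ hw h k hk)

lemma iterAdopt_iterAdopt (A : Finset 𝒜) (N k : ℕ) :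
    iterAdopt w θ (iterAdopt w θ A N) k = iterAdopt w θ A (N + k) := by
  induction k with
  | zero => rfl
  | succ k ih => rw [← Nat.add_assoc, iterAdopt, ih, iterAdopt]

lemma starAdopt_iterAdopt_subset (A : Finset 𝒜) (N : ℕ) :
    starAdopt w θ (iterAdopt w θ A N) ⊆ starAdopt w θ A := by
  intro x hx
  obtain ⟨k, hk⟩ := (mem_starAdopt w θ).1 hx
  rw [iterAdopt_iterAdopt] at hk
  exact iterAdopt_subset_starAdopt w θ A _ hk

lemma exists_starAdopt_subset_iterAdopt (A : Finset 𝒜) :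
    ∃ N, starAdopt w θ A ⊆ iterAdopt w θ A N := by
  have hcover : (starAdopt w θ A : Set 𝒜) ⊆ ⋃ k, (iterAdopt w θ A k : Set 𝒜) := fun x hx =>
    Set.mem_iUnion.2 ((mem_starAdopt w θ).1 hx)
  have hdir : Directed (· ⊆ ·) fun k => (iterAdopt w θ A k : Set 𝒜) :=
    ((iterAdopt_monotone w θ A).directed_le).mono_comp _ fun _ _ => coe_subset.2
  simpa only [coe_subset] using hdir.exists_mem_subset_of_finset_subset_biUnion hcover

end

theorem stmt7_general {𝒜 : Type*} [Fintype 𝒜] (w : 𝒜 → 𝒜 → ℝ) (θ : 𝒜 → ℝ)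
    (hw : ∀ a b, 0 ≤ w a b) (A B C : Finset 𝒜)
    (hAB : B ⊆ starAdopt w θ A) (hBC : C ⊆ starAdopt w θ B) :
    C ⊆ starAdopt w θ A := by
  obtain ⟨N, hN⟩ := exists_starAdopt_subset_iterAdopt w θ A
  calc C ⊆ starAdopt w θ B := hBC
    _ ⊆ starAdopt w θ (iterAdopt w θ A N) := starAdopt_mono w θ hw (hAB.trans hN)
    _ ⊆ starAdopt w θ A := starAdopt_iterAdopt_subset w θ A N

theorem stmt7 {𝒜 : Type*} [Fintype 𝒜] (w : 𝒜 → 𝒜 → ℝ) (θ : 𝒜 → ℝ)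
    (hw : ∀ a b, 0 ≤ w a b) (hθ : ∀ a, 0 ≤ θ a) (A B C : Finset 𝒜)
    (hAB : B ⊆ starAdopt w θ A) (hBC : C ⊆ starAdopt w θ B) :
    C ⊆ starAdopt w θ A :=
  stmt7_general w θ hw A B C hAB hBC
end

section
/- In the Lighthouse argument, the lighthouse agent adopts in one step: if A ⊔ B partitions 𝒜, a₀ ∈ A, and a₀ ∈ B*, then there exists ℓ ∈ A with ‖B‖_ℓ ≥ θ(ℓ) (i.e., ℓ ∈ B^1 \ B). -/
/-! If no agent of `A` feels enough pressure from `B`, then `B` is already closed under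
diffusion, so `B* = B`, which cannot contain `a₀ ∈ A`. -/

open Classical Finset

section Closed

variable {𝒜 : Type*} [Fintype 𝒜] {w : 𝒜 → 𝒜 → ℝ} {θ : 𝒜 → ℝ} {B : Finset 𝒜}

theorem iterAdopt_eq_self (hB : ∀ x ∉ B, pressure w B x < θ x) (k : ℕ) :
    iterAdopt w θ B k = B := by
  induction k with
  | zero => rfl
  | succ k ih =>
    rw [iterAdopt, ih, Finset.union_eq_left]
    intro x hx
    by_contra hxB
    exact (hB x hxB).not_ge (Finset.mem_filter.1 hx).2

theorem starAdopt_eq_self (hB : ∀ x ∉ B, pressure w B x < θ x) :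
    starAdopt w θ B = B := by
  ext x
  simp [starAdopt, iterAdopt_eq_self hB]

end Closed

theorem stmt10_general {𝒜 : Type*} [Fintype 𝒜] (w : 𝒜 → 𝒜 → ℝ) (θ : 𝒜 → ℝ)
    (A B : Finset 𝒜)
    (hcover : A ∪ B = Finset.univ) (hdisj : A ∩ B = ∅)
    (a₀ : 𝒜) (ha₀ : a₀ ∈ A) (hstar : a₀ ∈ starAdopt w θ B) :
    ∃ ℓ ∈ A, θ ℓ ≤ pressure w B ℓ := by
  by_contra! hA
  have hB : ∀ x ∉ B, pressure w B x < θ x := fun x hxB =>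
    hA x <| (Finset.mem_union.1 (hcover ▸ Finset.mem_univ x)).resolve_right hxB
  rw [starAdopt_eq_self hB] at hstar
  simpa [hdisj] using Finset.mem_inter.2 ⟨ha₀, hstar⟩

theorem stmt10 {𝒜 : Type*} [Fintype 𝒜] (w : 𝒜 → 𝒜 → ℝ) (θ : 𝒜 → ℝ)
    (hw : ∀ a b, 0 ≤ w a b) (hθ : ∀ a, 0 ≤ θ a) (A B : Finset 𝒜)
    (hcover : A ∪ B = Finset.univ) (hdisj : A ∩ B = ∅)
    (a₀ : 𝒜) (ha₀ : a₀ ∈ A) (hstar : a₀ ∈ starAdopt w θ B) :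
    ∃ ℓ ∈ A, θ ℓ ≤ pressure w B ℓ :=
  stmt10_general w θ A B hcover hdisj a₀ ha₀ hstar
end
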